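/- Fix integers r ≥ 1 and n > r + 1, a real vector θ, and define for layers j with r+1 < j < n the gauge values g_n(j) = θ·(1/Q(n−r))·Σ_{t=j+1−r}^{n−j} 1/(t·ln t), with g_n(j) = θ for j ≤ r+1 and g_n(j) = 0 for j ≥ n, where Q(m) = Σ_{t=2}^m 1/(t·ln t). Then the sum of squared increments satisfies Σ_{j=r+1}^{n-1} (g_n(j) − g_n(j+1))² ≤ (4·|θ|²/Q(n−r)²)·Σ_{t=2}^{n−r} 1/(t²·(ln t)²). -/

import Mathlib

open Filter

/-- `Q(m) = Σ_{t=2}^m 1/(t·ln t)`. -/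
noncomputable def Q (m : ℕ) : ℝ := ∑ t ∈ Finset.Icc 2 m, 1 / ((t : ℝ) * Real.log t)

/-!
Write `m = n - r` and `h t = 1/(t ln t)`. For `k ≥ 0` the gauge is `g (r+1+k) = (S_k / Q m) • θ`,
where `S_k` is the sum of `h` over a window `I_k`: `I_0 = [2, m]` and `I_k = [k+2, m-k-1]` for
`k ≥ 1`. The windows are nested, so each increment is `θ / Q m` times the sum of `h` over the
layer `I_k \ I_{k+1}`, which has at most three points. By Cauchy–Schwarz the square of that sum is
at most `3` times the sum of `h²` over the layer, and the layers are disjoint subsets of `[2, m]`.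
-/

open Finset

theorem sum_sq_sum_sdiff_succ_le {ι : Type*} [DecidableEq ι] (s : ℕ → Finset ι)
    (hs : ∀ k, s (k + 1) ⊆ s k) {C : ℕ} (hC : ∀ k, #(s k \ s (k + 1)) ≤ C) (f : ι → ℝ)
    (N : ℕ) :
    ∑ k ∈ range N, (∑ i ∈ s k \ s (k + 1), f i) ^ 2 ≤ C * ∑ i ∈ s 0, f i ^ 2 := by
  calc ∑ k ∈ range N, (∑ i ∈ s k \ s (k + 1), f i) ^ 2
      ≤ ∑ k ∈ range N, (C : ℝ) * ∑ i ∈ s k \ s (k + 1), f i ^ 2 := by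
        gcongr with k
        exact sq_sum_le_card_mul_sum_sq.trans (by gcongr; exact_mod_cast hC k)
    _ = C * (∑ i ∈ s 0, f i ^ 2 - ∑ i ∈ s N, f i ^ 2) := by
        simp_rw [sum_sdiff_eq_sub (hs _), ← mul_sum, sum_range_sub' (fun k ↦ ∑ i ∈ s k, f i ^ 2)]
    _ ≤ C * ∑ i ∈ s 0, f i ^ 2 := by
        gcongr
        exact sub_le_self _ (sum_nonneg fun i _ ↦ sq_nonneg _)

theorem Q_pos {m : ℕ} (hm : 2 ≤ m) : 0 < Q m := by
  refine sum_pos (fun t ht ↦ ?_) ⟨2, mem_Icc.2 ⟨le_rfl, hm⟩⟩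
  have ht : (1 : ℝ) < t := by exact_mod_cast (mem_Icc.1 ht).1
  have := Real.log_pos ht
  positivity

def gaugeWindow (m : ℕ) : ℕ → Finset ℕ
  | 0 => Icc 2 m
  | k + 1 => Icc (k + 3) (m - 2 - k)

theorem gaugeWindow_succ_subset (m k : ℕ) : gaugeWindow m (k + 1) ⊆ gaugeWindow m k := by
  intro x
  rcases k with _ | k <;> simp only [gaugeWindow, mem_Icc] <;> omega

theorem card_gaugeWindow_sdiff_succ_le (m k : ℕ) :
    #(gaugeWindow m k \ gaugeWindow m (k + 1)) ≤ 3 := by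
  have hsub : gaugeWindow m k \ gaugeWindow m (k + 1) ⊆ {k + 2, m - 1 - k, m} := by
    intro x
    rcases k with _ | k <;>
      simp only [gaugeWindow, Finset.mem_sdiff, mem_Icc, mem_insert, mem_singleton] <;> omega
  exact (card_le_card hsub).trans card_le_three

theorem gauge_eq_smul {E : Type*} [AddCommGroup E] [Module ℝ E] (θ : E) (r n : ℕ)
    (hn : r + 1 < n) (g : ℕ → E)
    (hg_low : ∀ j : ℕ, j ≤ r + 1 → g j = θ)
    (hg_high : ∀ j : ℕ, n ≤ j → g j = 0)
    (hg_mid : ∀ j : ℕ, r + 1 < j → j < n →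
      g j = ((1 / Q (n - r)) *
        ∑ t ∈ Finset.Icc (j + 1 - r) (n - j), 1 / ((t : ℝ) * Real.log t)) • θ)
    (k : ℕ) :
    g (r + 1 + k) =
      ((∑ t ∈ gaugeWindow (n - r) k, 1 / ((t : ℝ) * Real.log t)) / Q (n - r)) • θ := by
  rcases k with _ | k
  · rw [gaugeWindow, ← Q, div_self (Q_pos (by omega)).ne', one_smul]
    exact hg_low _ le_rfl
  rw [gaugeWindow]
  rcases lt_or_ge (r + 1 + (k + 1)) n with hj | hj
  · rw [hg_mid _ (by omega) hj, one_div_mul_eq_div, show r + 1 + (k + 1) + 1 - r = k + 3 by omega,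
      show n - (r + 1 + (k + 1)) = n - r - 2 - k by omega]
  · rw [hg_high _ hj, Icc_eq_empty (by omega), sum_empty, zero_div, zero_smul]

theorem gauge_increment_bound_general
    (d' : ℕ) (θ : EuclideanSpace ℝ (Fin d'))
    (r n : ℕ) (hn : r + 1 < n)
    (g : ℕ → EuclideanSpace ℝ (Fin d'))
    (hg_low : ∀ j : ℕ, j ≤ r + 1 → g j = θ)
    (hg_high : ∀ j : ℕ, n ≤ j → g j = 0)
    (hg_mid : ∀ j : ℕ, r + 1 < j → j < n →
      g j = ((1 / Q (n - r)) *
        ∑ t ∈ Finset.Icc (j + 1 - r) (n - j), 1 / ((t : ℝ) * Real.log t)) • θ) :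
    ∑ j ∈ Finset.Icc (r + 1) (n - 1), ‖g j - g (j + 1)‖ ^ 2
      ≤ 4 * ‖θ‖ ^ 2 / (Q (n - r)) ^ 2 *
        ∑ t ∈ Finset.Icc 2 (n - r), 1 / ((t : ℝ) ^ 2 * Real.log t ^ 2) := by
  set h : ℕ → ℝ := fun t ↦ 1 / ((t : ℝ) * Real.log t)
  set I := gaugeWindow (n - r)
  have hg (k : ℕ) : g (r + 1 + k) = ((∑ t ∈ I k, h t) / Q (n - r)) • θ :=
    gauge_eq_smul θ r n hn g hg_low hg_high hg_mid k
  have hIcc : Icc (r + 1) (n - 1) = Ico (r + 1) n := by ext; simp only [mem_Icc, mem_Ico]; omega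
  calc ∑ j ∈ Icc (r + 1) (n - 1), ‖g j - g (j + 1)‖ ^ 2
      = ‖θ‖ ^ 2 / Q (n - r) ^ 2 * ∑ k ∈ range (n - (r + 1)), (∑ t ∈ I k \ I (k + 1), h t) ^ 2 := by
        rw [hIcc, sum_Ico_eq_sum_range, mul_sum]
        refine sum_congr rfl fun k _ ↦ ?_
        rw [hg, show r + 1 + k + 1 = r + 1 + (k + 1) from rfl, hg,
          sum_sdiff_eq_sub (gaugeWindow_succ_subset _ k), ← sub_smul, ← sub_div, norm_smul,
          Real.norm_eq_abs, mul_pow, sq_abs, div_pow]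
        ring
    _ ≤ ‖θ‖ ^ 2 / Q (n - r) ^ 2 * ((3 : ℕ) * ∑ t ∈ I 0, h t ^ 2) := by
        gcongr
        exact sum_sq_sum_sdiff_succ_le I (gaugeWindow_succ_subset _)
          (card_gaugeWindow_sdiff_succ_le _) h _
    _ ≤ 4 * ‖θ‖ ^ 2 / Q (n - r) ^ 2 *
          ∑ t ∈ Icc 2 (n - r), 1 / ((t : ℝ) ^ 2 * Real.log t ^ 2) := by
        simp only [I, gaugeWindow, h, div_pow, one_pow, mul_pow]
        rw [mul_div_assoc, mul_comm (4 : ℝ), mul_assoc]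
        gcongr
        norm_num

/-- For fixed `r ≥ 1` and `n > r + 1`, a vector `θ ∈ ℝ^{d'}`, and
the gauge interpolation `g_n(j) = θ·(1/Q(n−r))·Σ_{t=j+1−r}^{n−j} 1/(t·ln t)` for
`r+1 < j < n`, with `g_n(j) = θ` for `j ≤ r+1` and `g_n(j) = 0` for `j ≥ n`, the
sum of squared increments satisfies
`Σ_{j=r+1}^{n-1} ‖g_n(j) − g_n(j+1)‖² ≤ (4·‖θ‖²/Q(n−r)²)·Σ_{t=2}^{n−r} 1/(t²·(ln t)²)`. -/
theorem gauge_increment_bound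
    (d' : ℕ) (θ : EuclideanSpace ℝ (Fin d'))
    (r n : ℕ) (hr : 1 ≤ r) (hn : r + 1 < n)
    (g : ℕ → EuclideanSpace ℝ (Fin d'))
    (hg_low : ∀ j : ℕ, j ≤ r + 1 → g j = θ)
    (hg_high : ∀ j : ℕ, n ≤ j → g j = 0)
    (hg_mid : ∀ j : ℕ, r + 1 < j → j < n →
      g j = ((1 / Q (n - r)) *
        ∑ t ∈ Finset.Icc (j + 1 - r) (n - j), 1 / ((t : ℝ) * Real.log t)) • θ) :
    ∑ j ∈ Finset.Icc (r + 1) (n - 1), ‖g j - g (j + 1)‖ ^ 2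
      ≤ 4 * ‖θ‖ ^ 2 / (Q (n - r)) ^ 2 *
        ∑ t ∈ Finset.Icc 2 (n - r), 1 / ((t : ℝ) ^ 2 * Real.log t ^ 2) :=
  gauge_increment_bound_general d' θ r n hn g hg_low hg_high hg_mid
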